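/- arXiv:1710.10683 — 5 statements merged into one kernel-verified Lean document; each statement's English description precedes it below -/
import Mathlib

section
/- For 0 < p < 1, the sequence α_n² = 1 − p^{2n+2} (n ≥ 0) is completely alternating. -/
noncomputable def nabla (φ : ℕ → ℝ) : ℕ → ℝ := fun n => φ n - φ (n + 1)

def CompletelyAlternating (ψ : ℕ → ℝ) : Prop :=
  ∀ k : ℕ, 1 ≤ k → ∀ n : ℕ, (nabla^[k] ψ) n ≤ 0

def CompletelyMonotone (φ : ℕ → ℝ) : Prop :=
  ∀ k n : ℕ, 0 ≤ (nabla^[k] φ) n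

lemma nabla_geom (q : ℝ) :
    ∀ k : ℕ, (nabla^[k + 1] (fun n => 1 - q ^ (n + 1))) =
      fun n => -(q ^ (n + 1) * (1 - q) ^ (k + 1)) := by
  intro k
  induction k with
  | zero =>
    funext n
    simp [nabla, pow_succ]
    ring
  | succ k ih =>
    funext n
    rw [Function.iterate_succ_apply', ih]
    simp only [nabla]
    rw [pow_succ (1 - q) (k + 1)]
    ring

theorem stmt8 (p : ℝ) (hp0 : 0 < p) (hp1 : p < 1) :
    CompletelyAlternating (fun n => 1 - p ^ (2 * n + 2)) := by
  have hfun : (fun n : ℕ => 1 - p ^ (2 * n + 2)) = fun n => 1 - (p ^ 2) ^ (n + 1) := by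
    funext n
    rw [← pow_mul]
    ring_nf
  intro k hk n
  obtain ⟨m, rfl⟩ := Nat.exists_eq_add_of_le hk
  rw [hfun, Nat.add_comm 1 m, nabla_geom]
  have hq0 : 0 < p ^ 2 := pow_pos hp0 2
  have hq1 : p ^ 2 < 1 := pow_lt_one₀ hp0.le hp1 two_ne_zero
  have h1 : 0 < (p ^ 2) ^ (n + 1) := pow_pos hq0 _
  have h2 : 0 < (1 - p ^ 2) ^ (m + 1) := pow_pos (by linarith) _
  simp only
  nlinarith
end

section
/- The sequence α(n) = 1 + 1/2 + 1/3 + ⋯ + 1/(n+1) − ln(n+2) (n ≥ 0) is completely alternating. -/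
lemma nabla_iter_succ (φ : ℕ → ℝ) (k n : ℕ) :
    (nabla^[k+1] φ) n = (nabla^[k] φ) n - (nabla^[k] φ) (n+1) := by
  rw [Function.iterate_succ_apply']; rfl

lemma nabla_sub (φ ψ : ℕ → ℝ) (k m : ℕ) :
    (nabla^[k] (fun n => φ n - ψ n)) m = (nabla^[k] φ) m - (nabla^[k] ψ) m := by
  induction k generalizing m with
  | zero => simp
  | succ k ih =>
    rw [nabla_iter_succ, nabla_iter_succ, nabla_iter_succ, ih, ih]; ring

lemma nabla_neg (φ : ℕ → ℝ) (k m : ℕ) :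
    (nabla^[k] (fun n => -(φ n))) m = -((nabla^[k] φ) m) := by
  induction k generalizing m with
  | zero => simp
  | succ k ih =>
    rw [nabla_iter_succ, nabla_iter_succ, ih, ih]; ring

lemma nabla_inv (c : ℝ) (hc : 0 < c) (k n : ℕ) :
    (nabla^[k] (fun n : ℕ => 1 / ((n:ℝ) + c))) n
      = (Nat.factorial k : ℝ) / ∏ i ∈ Finset.range (k+1), ((n:ℝ) + c + i) := by
  induction k generalizing n with
  | zero => simp
  | succ k ih =>
    rw [nabla_iter_succ, ih, ih]
    have hpos : ∀ (x : ℝ), 0 ≤ x → ∀ m : ℕ, 0 < ∏ i ∈ Finset.range m, (x + c + (i:ℝ)) :=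
      fun x hx m => Finset.prod_pos (fun i _ => by positivity)
    have h1 : 0 < ∏ i ∈ Finset.range (k+1), ((n:ℝ) + c + i) := hpos _ (by positivity) _
    have h2 : 0 < ∏ i ∈ Finset.range (k+1), ((↑(n+1):ℝ) + c + i) := hpos _ (by positivity) _
    have hrel : (∏ i ∈ Finset.range (k+1), ((↑(n+1):ℝ) + c + i)) * ((n:ℝ) + c)
        = (∏ i ∈ Finset.range (k+1), ((n:ℝ) + c + i)) * ((n:ℝ) + c + (k+1)) := by
      have e1 : ∏ i ∈ Finset.range (k+2), ((n:ℝ) + c + i)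
          = (∏ i ∈ Finset.range (k+1), ((n:ℝ) + c + i)) * ((n:ℝ) + c + (k+1)) := by
        rw [Finset.prod_range_succ]; push_cast; ring_nf
      have e2 : ∏ i ∈ Finset.range (k+2), ((n:ℝ) + c + i)
          = (∏ i ∈ Finset.range (k+1), ((↑(n+1):ℝ) + c + i)) * ((n:ℝ) + c) := by
        rw [Finset.prod_range_succ']
        congr 1
        · exact Finset.prod_congr rfl (fun i _ => by push_cast; ring)
        · push_cast; ring
      rw [← e2, e1]
    have e1 : ∏ i ∈ Finset.range (k+2), ((n:ℝ) + c + i)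
        = (∏ i ∈ Finset.range (k+1), ((n:ℝ) + c + i)) * ((n:ℝ) + c + (k+1)) := by
      rw [Finset.prod_range_succ]; push_cast; ring_nf
    rw [e1]
    have hnc : (0:ℝ) < (n:ℝ) + c := by positivity
    have hnck : (0:ℝ) < (n:ℝ) + c + (k+1) := by positivity
    have hB : (∏ i ∈ Finset.range (k+1), ((↑(n+1):ℝ) + c + i))
        = (∏ i ∈ Finset.range (k+1), ((n:ℝ) + c + i)) * ((n:ℝ) + c + (k+1)) / ((n:ℝ) + c) := by
      rw [eq_div_iff hnc.ne']; exact hrel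
    rw [hB, Nat.factorial_succ]
    push_cast
    field_simp
    ring

noncomputable def ht (t : ℝ) : ℕ → ℝ := fun n => 1/((n:ℝ)+2) - 1/((n:ℝ)+2+t)

lemma key_nonneg (t : ℝ) (ht0 : 0 ≤ t) (k n : ℕ) : 0 ≤ (nabla^[k] (ht t)) n := by
  have : ht t = fun n : ℕ => 1/((n:ℝ)+2) - 1/((n:ℝ)+(2+t)) := by
    funext n; simp [ht]; ring_nf
  rw [this, nabla_sub, nabla_inv 2 (by norm_num), nabla_inv (2+t) (by positivity)]
  apply sub_nonneg.2
  apply div_le_div_of_nonneg_left (by positivity) (Finset.prod_pos fun i _ => by positivity)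
  apply Finset.prod_le_prod (fun i _ => by positivity) (fun i _ => by linarith)

lemma cont_nabla (k n : ℕ) :
    ContinuousOn (fun t : ℝ => (nabla^[k] (ht t)) n) (Set.uIcc (0:ℝ) 1) := by
  have heq : ∀ t ∈ Set.uIcc (0:ℝ) 1, (nabla^[k] (ht t)) n
      = (Nat.factorial k : ℝ) / ∏ i ∈ Finset.range (k+1), ((n:ℝ) + 2 + i)
        - (Nat.factorial k : ℝ) / ∏ i ∈ Finset.range (k+1), ((n:ℝ) + (2+t) + i) := by
    intro t htt
    rw [Set.uIcc_of_le (by norm_num)] at htt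
    have h0 : (0:ℝ) ≤ t := htt.1
    have : ht t = fun n : ℕ => 1/((n:ℝ)+2) - 1/((n:ℝ)+(2+t)) := by
      funext n; simp [ht]; ring_nf
    rw [this, nabla_sub, nabla_inv 2 (by norm_num), nabla_inv (2+t) (by positivity)]
  apply ContinuousOn.congr _ heq
  apply ContinuousOn.sub continuousOn_const
  apply ContinuousOn.div continuousOn_const
  · exact (continuous_finset_prod _ (fun i _ => by continuity)).continuousOn
  · intro t htt
    rw [Set.uIcc_of_le (by norm_num)] at htt
    have h0 : (0:ℝ) ≤ t := htt.1
    exact (Finset.prod_pos fun i _ => by positivity).ne'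

lemma intble (k n : ℕ) :
    IntervalIntegrable (fun t : ℝ => (nabla^[k] (ht t)) n) MeasureTheory.volume 0 1 :=
  (cont_nabla k n).intervalIntegrable

lemma interchange (k n : ℕ) :
    (nabla^[k] (fun n => ∫ t in (0:ℝ)..1, ht t n)) n
      = ∫ t in (0:ℝ)..1, (nabla^[k] (ht t)) n := by
  induction k generalizing n with
  | zero => simp
  | succ k ih =>
    rw [nabla_iter_succ, ih, ih, ← intervalIntegral.integral_sub (intble k n) (intble k (n+1))]
    exact intervalIntegral.integral_congr (fun t _ => (nabla_iter_succ _ _ _).symm)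

lemma int_ht (n : ℕ) :
    ∫ t in (0:ℝ)..1, ht t n
      = 1/((n:ℝ)+2) - (Real.log ((n:ℝ)+3) - Real.log ((n:ℝ)+2)) := by
  have h1 : IntervalIntegrable (fun _ : ℝ => 1/((n:ℝ)+2)) MeasureTheory.volume 0 1 :=
    intervalIntegrable_const
  have h2 : IntervalIntegrable (fun t : ℝ => 1/((n:ℝ)+2+t)) MeasureTheory.volume 0 1 := by
    apply ContinuousOn.intervalIntegrable
    apply ContinuousOn.div continuousOn_const ((continuous_const.add continuous_id).continuousOn)
    intro t htt
    rw [Set.uIcc_of_le (by norm_num)] at htt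
    have h0 : (0:ℝ) ≤ t := htt.1
    have hp : (0:ℝ) < (n:ℝ) + 2 + t := by positivity
    exact hp.ne'
  have : (∫ t in (0:ℝ)..1, ht t n)
      = (∫ t in (0:ℝ)..1, 1/((n:ℝ)+2)) - ∫ t in (0:ℝ)..1, 1/((n:ℝ)+2+t) := by
    rw [← intervalIntegral.integral_sub h1 h2]; rfl
  rw [this]
  congr 1
  · simp
  · have e : (fun t : ℝ => 1/((n:ℝ)+2+t)) = (fun t : ℝ => 1/t) ∘ (fun t => t + ((n:ℝ)+2)) := by
      funext t; simp [Function.comp]; ring_nf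
    calc ∫ t in (0:ℝ)..1, 1/((n:ℝ)+2+t)
        = ∫ x in ((0:ℝ)+((n:ℝ)+2))..(1+((n:ℝ)+2)), 1/x := by
          rw [← intervalIntegral.integral_comp_add_right (fun x => 1/x) ((n:ℝ)+2)]
          apply intervalIntegral.integral_congr
          intro t _; simp; ring_nf
      _ = Real.log ((n:ℝ)+3) - Real.log ((n:ℝ)+2) := by
          rw [integral_one_div_of_pos (by positivity) (by positivity),
             Real.log_div (by positivity) (by positivity)]
          norm_num
          ring_nf

theorem stmt9 :
    CompletelyAlternating (fun n =>
      (∑ i ∈ Finset.range (n + 1), (1 : ℝ) / (i + 1)) - Real.log ((n : ℝ) + 2)) := by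
  have hα : nabla (fun n =>
      (∑ i ∈ Finset.range (n + 1), (1 : ℝ) / (i + 1)) - Real.log ((n : ℝ) + 2))
      = fun n => -(∫ t in (0:ℝ)..1, ht t n) := by
    funext n
    rw [int_ht]
    show (∑ i ∈ Finset.range (n + 1), (1 : ℝ) / (i + 1)) - Real.log ((n : ℝ) + 2)
        - ((∑ i ∈ Finset.range (n + 1 + 1), (1 : ℝ) / (i + 1)) - Real.log ((↑(n+1) : ℝ) + 2)) = _
    rw [Finset.sum_range_succ (fun i => (1:ℝ) / (i + 1)) (n+1)]
    have c1 : ((↑(n+1):ℝ) + 1) = (n:ℝ) + 2 := by push_cast; ring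
    have c2 : ((↑(n+1):ℝ) + 2) = (n:ℝ) + 3 := by push_cast; ring
    rw [c1, c2]
    ring
  intro k hk n
  obtain ⟨m, rfl⟩ : ∃ m, k = m + 1 := ⟨k - 1, (Nat.succ_pred_eq_of_pos hk).symm⟩
  rw [Function.iterate_succ_apply, hα, nabla_neg, interchange]
  simp only [neg_nonpos]
  apply intervalIntegral.integral_nonneg (by norm_num)
  intro t htt
  exact key_nonneg t htt.1 m n
end

section
/- If (x_n) is a completely alternating sequence, then its Cesàro transform c_n = (x_0 + x_1 + ⋯ + x_n)/(n+1) is also completely alternating. Moreover, the differences satisfy C(m,j) = (m!·j!/(m+j+1)!) · Σ_{k=0}^{j} C(m+k, m) · D(m,k), where D(m,j) = Σ_{i=0}^m (−1)^i C(m,i) x_{j+i} and C(m,j) = Σ_{i=0}^m (−1)^i C(m,i) c_{j+i}. -/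
open Finset

noncomputable def ces (x : ℕ → ℝ) : ℕ → ℝ := fun n => (∑ i ∈ Finset.range (n + 1), x i) / ((n : ℝ) + 1)

noncomputable def Dd (x : ℕ → ℝ) (m k : ℕ) : ℝ := ∑ i ∈ range (m + 1), (-1:ℝ)^i * (m.choose i) * x (k + i)

noncomputable def RR (x : ℕ → ℝ) (m j : ℕ) : ℝ :=
  ((m.factorial : ℝ) * (j.factorial : ℝ) / ((m + j + 1).factorial : ℝ)) *
    ∑ k ∈ range (j + 1), ((m + k).choose m : ℝ) * Dd x m k

lemma nabla_iter (φ : ℕ → ℝ) (m j : ℕ) :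
    (nabla^[m] φ) j = ∑ i ∈ range (m + 1), (-1 : ℝ) ^ i * (m.choose i) * φ (j + i) := by
  induction m generalizing j with
  | zero => simp [nabla]
  | succ m ih =>
    have h1 : (nabla^[m+1] φ) j = (nabla^[m] φ) j - (nabla^[m] φ) (j+1) := by
      rw [Function.iterate_succ_apply']; rfl
    rw [h1, ih j, ih (j+1)]
    have e1 : ∑ i ∈ range (m+1), (-1:ℝ)^i * (m.choose i) * φ (j+i)
        = ∑ i ∈ range (m+2), (-1:ℝ)^i * (m.choose i) * φ (j+i) := by
      rw [sum_range_succ (fun i => (-1:ℝ)^i * (m.choose i) * φ (j+i)) (m+1)]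
      simp
    have e2 : ∑ i ∈ range (m+1), (-1:ℝ)^i * (m.choose i) * φ (j+1+i)
        = φ j - ∑ i ∈ range (m+2), (-1:ℝ)^i * (m.choose (i-1)) * φ (j+i) := by
      rw [Finset.sum_range_succ' (fun i => (-1:ℝ)^i * (m.choose (i-1)) * φ (j+i)) (m+1)]
      simp only [Nat.add_sub_cancel, Nat.zero_sub, Nat.choose_zero_right, pow_zero,
        Nat.cast_one, one_mul, add_zero]
      rw [eq_sub_iff_add_eq]
      have hneg : ∑ i ∈ range (m+1), (-1:ℝ)^(i+1) * (m.choose i) * φ (j+(i+1))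
          = - ∑ i ∈ range (m+1), (-1:ℝ)^i * (m.choose i) * φ (j+1+i) := by
        rw [← Finset.sum_neg_distrib]
        apply sum_congr rfl
        intro i _
        have : j + (i+1) = j + 1 + i := by omega
        rw [this, pow_succ]
        ring
      rw [hneg]
      ring
    rw [e1, e2]
    have e3 : ∑ i ∈ range (m+2), ((-1:ℝ)^i * (m.choose i) * φ (j+i)
        + (-1:ℝ)^i * (m.choose (i-1)) * φ (j+i)
        - (-1:ℝ)^i * ((m+1).choose i) * φ (j+i)) = φ j := by
      have hcong : ∀ i ∈ range (m+2), ((-1:ℝ)^i * (m.choose i) * φ (j+i)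
          + (-1:ℝ)^i * (m.choose (i-1)) * φ (j+i)
          - (-1:ℝ)^i * ((m+1).choose i) * φ (j+i)) = if i = 0 then φ j else 0 := by
        intro i _
        match i with
        | 0 => simp
        | (s+1) =>
          simp only [Nat.succ_ne_zero, if_false, Nat.add_sub_cancel]
          rw [Nat.choose_succ_succ]
          push_cast
          ring
      rw [sum_congr rfl hcong, Finset.sum_ite_eq' (range (m+2)) 0 (fun _ => φ j)]
      simp
    rw [Finset.sum_sub_distrib, Finset.sum_add_distrib] at e3
    have : m + 1 + 1 = m + 2 := rfl
    rw [this]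
    linarith



lemma alt2 (m : ℕ) : ∀ r : ℕ, ∑ s ∈ range r, (-1:ℝ)^s * ((m+1).choose (s+1)) = 1 - (-1)^r * (m.choose r) := by
  intro r
  induction r with
  | zero => simp
  | succ r ih =>
    rw [sum_range_succ, ih, Nat.choose_succ_succ (m) (r)]
    push_cast
    ring

lemma myInnerSum (m l : ℕ) (hl : l ≤ m) :
    ∑ i ∈ Finset.Icc l m, (-1:ℝ)^i * ((m+1).choose (i+1)) = (-1)^l * (m.choose l) := by
  have h : Finset.Icc l m = Finset.Ico l (m+1) := by
    rw [Finset.Ico_add_one_right_eq_Icc]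
  rw [h, Finset.sum_Ico_eq_sub _ (by omega)]
  rw [alt2, alt2]
  simp [Nat.choose_succ_self]


lemma base_case (x : ℕ → ℝ) (m : ℕ) :
    (nabla^[m] (ces x)) 0 = (∑ i ∈ range (m + 1), (-1:ℝ)^i * (m.choose i) * x i) / ((m:ℝ) + 1) := by
  rw [nabla_iter]
  simp only [zero_add, ces]
  have hterm : ∀ i ∈ range (m+1), (-1:ℝ)^i * (m.choose i) * ((∑ l ∈ range (i+1), x l) / ((i:ℝ)+1))
      = ((-1:ℝ)^i * (((m+1).choose (i+1) : ℕ) : ℝ) * (∑ l ∈ range (i+1), x l)) / ((m:ℝ)+1) := by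
    intro i _
    have hc := Nat.add_one_mul_choose_eq m i
    have hcr : ((m:ℝ)+1) * (m.choose i) = ((m+1).choose (i+1) : ℕ) * ((i:ℝ)+1) := by
      exact_mod_cast hc
    have h1 : ((i:ℝ)+1) ≠ 0 := by positivity
    have h2 : ((m:ℝ)+1) ≠ 0 := by positivity
    field_simp
    linear_combination (∑ l ∈ range (i+1), x l) * hcr
  rw [sum_congr rfl hterm, ← Finset.sum_div]
  congr 1
  have hswap : ∑ i ∈ range (m+1), (-1:ℝ)^i * (((m+1).choose (i+1) : ℕ) : ℝ) * (∑ l ∈ range (i+1), x l)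
      = ∑ l ∈ range (m+1), ∑ i ∈ Finset.Icc l m, (-1:ℝ)^i * (((m+1).choose (i+1) : ℕ) : ℝ) * x l := by
    simp_rw [Finset.mul_sum]
    apply Finset.sum_comm'
    intro i l
    simp only [mem_range, Finset.mem_Icc]
    omega
  rw [hswap]
  apply sum_congr rfl
  intro l hl
  rw [← Finset.sum_mul]
  rw [myInnerSum m l (by simpa using Nat.lt_succ_iff.mp (mem_range.mp hl))]


lemma Dd_eq (x : ℕ → ℝ) (m k : ℕ) : Dd x m k = (nabla^[m] x) k := (nabla_iter x m k).symm

lemma Dd_succ (x : ℕ → ℝ) (m k : ℕ) : Dd x (m+1) k = Dd x m k - Dd x m (k+1) := by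
  rw [Dd_eq, Dd_eq, Dd_eq, Function.iterate_succ_apply']
  rfl

lemma fact_ne (n : ℕ) : ((n.factorial : ℝ)) ≠ 0 := by
  exact_mod_cast n.factorial_pos.ne'

lemma Rstep (x : ℕ → ℝ) (m j : ℕ) : RR x m j - RR x (m+1) j = RR x m (j+1) := by
  unfold RR
  -- rewrite D(m+1) inside the middle sum and Abel-sum it
  have habel : ∑ k ∈ range (j+1), ((m+1+k).choose (m+1) : ℝ) * Dd x (m+1) k
      = ∑ k ∈ range (j+1), ((m+1+k).choose (m+1) : ℝ) * Dd x m k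
        - ∑ k ∈ range (j+2), ((m+k).choose (m+1) : ℝ) * Dd x m k := by
    have h1 : ∑ k ∈ range (j+2), ((m+k).choose (m+1) : ℝ) * Dd x m k
        = ∑ k ∈ range (j+1), ((m+1+k).choose (m+1) : ℝ) * Dd x m (k+1) := by
      rw [Finset.sum_range_succ' (fun k => ((m+k).choose (m+1) : ℝ) * Dd x m k) (j+1)]
      simp only [add_zero, Nat.choose_succ_self, Nat.cast_zero, zero_mul, add_zero]
      apply sum_congr rfl
      intro k _
      have h2 : m + (k+1) = m+1+k := by omega
      rw [h2]
    rw [h1, ← Finset.sum_sub_distrib]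
    apply sum_congr rfl
    intro k _
    rw [Dd_succ]
    ring
  rw [habel]
  have F1 : ∑ k ∈ range (j+1), ((m+1+k).choose (m+1) : ℝ) * Dd x m k
      = ∑ k ∈ range (j+1), ((m+k).choose m : ℝ) * Dd x m k
        + ∑ k ∈ range (j+1), ((m+k).choose (m+1) : ℝ) * Dd x m k := by
    rw [← Finset.sum_add_distrib]
    apply sum_congr rfl
    intro k _
    have hp : (m+1+k).choose (m+1) = (m+k).choose m + (m+k).choose (m+1) := by
      have : m+1+k = (m+k)+1 := by omega
      rw [this, Nat.choose_succ_succ]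
    rw [hp]
    push_cast
    ring
  have F2 : ∑ k ∈ range (j+1+1), ((m+k).choose m : ℝ) * Dd x m k
      = ∑ k ∈ range (j+1), ((m+k).choose m : ℝ) * Dd x m k
        + ((m+(j+1)).choose m : ℝ) * Dd x m (j+1) := by
    rw [sum_range_succ]
  have F3 : ∑ k ∈ range (j+2), ((m+k).choose (m+1) : ℝ) * Dd x m k
      = ∑ k ∈ range (j+1), ((m+k).choose (m+1) : ℝ) * Dd x m k
        + ((m+(j+1)).choose (m+1) : ℝ) * Dd x m (j+1) := by
    rw [sum_range_succ]
  rw [F1, F2, F3]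
  have i1 : m+1+j+1 = m+j+2 := by omega
  have i2 : m+(j+1)+1 = m+j+2 := by omega
  have i3 : m+(j+1) = m+j+1 := by omega
  rw [i1, i2, i3]
  have hf1 : ((m+j+2).factorial : ℝ) = ((m:ℝ)+(j:ℝ)+2) * ((m+j+1).factorial : ℝ) := by
    rw [show m+j+2 = (m+j+1)+1 from rfl, Nat.factorial_succ]
    push_cast
    ring
  have hf2 : (((m+1).factorial : ℕ) : ℝ) = ((m:ℝ)+1) * (m.factorial : ℝ) := by
    rw [Nat.factorial_succ]; push_cast; ring
  have hf3 : (((j+1).factorial : ℕ) : ℝ) = ((j:ℝ)+1) * (j.factorial : ℝ) := by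
    rw [Nat.factorial_succ]; push_cast; ring
  have e1 : ((m+j+1).choose m : ℝ) * (m.factorial : ℝ) * ((j+1).factorial : ℝ)
      = ((m+j+1).factorial : ℝ) := by
    have h := Nat.choose_mul_factorial_mul_factorial (show m ≤ m+j+1 by omega)
    rw [show m+j+1-m = j+1 by omega] at h
    exact_mod_cast h
  have e2 : ((m+j+1).choose (m+1) : ℝ) * ((m+1).factorial : ℝ) * (j.factorial : ℝ)
      = ((m+j+1).factorial : ℝ) := by
    have h := Nat.choose_mul_factorial_mul_factorial (show m+1 ≤ m+j+1 by omega)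
    rw [show m+j+1-(m+1) = j by omega] at h
    exact_mod_cast h
  have ha' : (m.factorial : ℝ) * (j.factorial : ℝ) / ((m+j+1).factorial : ℝ)
      - ((m+1).factorial : ℝ) * (j.factorial : ℝ) / ((m+j+2).factorial : ℝ)
      = (m.factorial : ℝ) * ((j+1).factorial : ℝ) / ((m+j+2).factorial : ℝ) := by
    rw [hf1, hf2, hf3]
    have h1 : ((m+j+1).factorial : ℝ) ≠ 0 := fact_ne _
    have h2 : ((m:ℝ)+(j:ℝ)+2) ≠ 0 := by positivity
    field_simp
    ring
  have hb : ((m+1).factorial : ℝ) * (j.factorial : ℝ) / ((m+j+2).factorial : ℝ)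
        * ((m+j+1).choose (m+1) : ℝ)
      = (m.factorial : ℝ) * ((j+1).factorial : ℝ) / ((m+j+2).factorial : ℝ)
        * ((m+j+1).choose m : ℝ) := by
    have h2 : ((m+j+2).factorial : ℝ) ≠ 0 := fact_ne _
    rw [div_mul_eq_mul_div, div_mul_eq_mul_div, div_eq_div_iff h2 h2]
    linear_combination ((m+j+2).factorial : ℝ) * (e2 - e1)
  set S1 := ∑ k ∈ range (j+1), ((m+k).choose m : ℝ) * Dd x m k
  set S3 := ∑ k ∈ range (j+1), ((m+k).choose (m+1) : ℝ) * Dd x m k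
  set D := Dd x m (j+1)
  linear_combination S1 * ha' + D * hb


lemma key (x : ℕ → ℝ) (j m : ℕ) : (nabla^[m] (ces x)) j = RR x m j := by
  induction j generalizing m with
  | zero =>
    rw [base_case]
    unfold RR
    rw [show range (0+1) = {0} from rfl, sum_singleton]
    simp only [add_zero, Nat.choose_self, Nat.cast_one, one_mul, Nat.factorial_zero,
      Nat.cast_one, mul_one]
    unfold Dd
    simp only [zero_add]
    rw [Nat.factorial_succ]
    have h1 : (m.factorial : ℝ) ≠ 0 := fact_ne _
    have h2 : ((m:ℝ)+1) ≠ 0 := by positivity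
    push_cast
    field_simp
  | succ j ih =>
    have h1 : (nabla^[m+1] (ces x)) j = (nabla^[m] (ces x)) j - (nabla^[m] (ces x)) (j+1) := by
      rw [Function.iterate_succ_apply']
      rfl
    have h2 : (nabla^[m] (ces x)) (j+1) = RR x m j - RR x (m+1) j := by
      rw [← ih m, ← ih (m+1)]
      rw [h1]
      ring
    rw [h2, Rstep]

theorem stmt11 (x : ℕ → ℝ) (hx : CompletelyAlternating x) :
    CompletelyAlternating (fun n => (∑ i ∈ Finset.range (n + 1), x i) / ((n : ℝ) + 1)) ∧
    (∀ m j : ℕ,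
      (∑ i ∈ Finset.range (m + 1), (-1 : ℝ) ^ i * (m.choose i) *
        ((∑ l ∈ Finset.range (j + i + 1), x l) / ((j : ℝ) + (i : ℝ) + 1)))
      = ((m.factorial : ℝ) * (j.factorial : ℝ) / ((m + j + 1).factorial : ℝ)) *
        ∑ k ∈ Finset.range (j + 1), ((m + k).choose m : ℝ) *
          (∑ i ∈ Finset.range (m + 1), (-1 : ℝ) ^ i * (m.choose i) * x (k + i))) := by
  constructor
  · intro k hk n
    show (nabla^[k] (ces x)) n ≤ 0
    rw [key]
    unfold RR
    have hA : (0:ℝ) ≤ (k.factorial : ℝ) * (n.factorial : ℝ) / ((k + n + 1).factorial : ℝ) := by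
      positivity
    have hS : ∑ t ∈ range (n + 1), ((k + t).choose k : ℝ) * Dd x k t ≤ 0 := by
      apply Finset.sum_nonpos
      intro t _
      have hD : Dd x k t ≤ 0 := by
        rw [Dd_eq]
        exact hx k hk t
      have hc : (0:ℝ) ≤ ((k + t).choose k : ℝ) := by positivity
      nlinarith
    nlinarith
  · intro m j
    have hL : (∑ i ∈ Finset.range (m + 1), (-1 : ℝ) ^ i * (m.choose i) *
        ((∑ l ∈ Finset.range (j + i + 1), x l) / ((j : ℝ) + (i : ℝ) + 1)))
        = (nabla^[m] (ces x)) j := by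
      rw [nabla_iter]
      apply sum_congr rfl
      intro i _
      unfold ces
      congr 1
      push_cast
      ring
    rw [hL, key]
    unfold RR Dd
    rfl
end

section
/- If (x_n) is a positive sequence whose logarithm is completely alternating, then its geometric Cesàro transform g_n = (x_0 · x_1 ⋯ x_n)^{1/(n+1)} also has completely alternating logarithm. -/
/-- The weighted Cesàro-type transform appearing in `∇ᵏ` of the Cesàro mean. -/
noncomputable def Tr (k : ℕ) (φ : ℕ → ℝ) : ℕ → ℝ := fun n =>
  (∑ m ∈ Finset.range (n + 1), (((m + k).choose k : ℕ) : ℝ) * φ m) /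
    (((n : ℝ) + 1) * (((n + k + 1).choose k : ℕ) : ℝ))

lemma abel_sum (φ : ℕ → ℝ) (k n : ℕ) :
    ∑ m ∈ Finset.range (n + 1), (((m + (k + 1)).choose (k + 1) : ℕ) : ℝ) * (φ m - φ (m + 1)) =
    (∑ m ∈ Finset.range (n + 1), (((m + k).choose k : ℕ) : ℝ) * φ m)
      - (((n + k + 1).choose (k + 1) : ℕ) : ℝ) * φ (n + 1) := by
  induction n with
  | zero => simp [Nat.choose_self]
  | succ n ih =>
    rw [Finset.sum_range_succ, ih, Finset.sum_range_succ _ (n + 1)]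
    have i1 : n + 1 + (k + 1) = (n + k + 1) + 1 := by omega
    have i2 : n + 1 + k = n + k + 1 := by omega
    rw [i1, i2, Nat.choose_succ_succ (n + k + 1) k]
    push_cast
    ring

lemma key_step (φ : ℕ → ℝ) (k n : ℕ) :
    Tr k φ n - Tr k φ (n + 1) = Tr (k + 1) (nabla φ) n := by
  simp only [Tr, nabla]
  set S : ℝ := ∑ m ∈ Finset.range (n + 1), (((m + k).choose k : ℕ) : ℝ) * φ m with hS
  set a : ℝ := (((n + k + 1).choose k : ℕ) : ℝ) with ha0
  set b : ℝ := (((n + 1 + k + 1).choose k : ℕ) : ℝ) with hb0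
  set c : ℝ := (((n + (k + 1) + 1).choose (k + 1) : ℕ) : ℝ) with hc0
  set d : ℝ := (((n + k + 1).choose (k + 1) : ℕ) : ℝ) with hd0
  have hsum2 : ∑ m ∈ Finset.range (n + 1 + 1), (((m + k).choose k : ℕ) : ℝ) * φ m
      = S + a * φ (n + 1) := by
    rw [Finset.sum_range_succ, show n + 1 + k = n + k + 1 from by omega]
  have habel : ∑ m ∈ Finset.range (n + 1), (((m + (k + 1)).choose (k + 1) : ℕ) : ℝ)
      * (φ m - φ (m + 1)) = S - d * φ (n + 1) := abel_sum φ k n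
  rw [hsum2, habel]
  have idx : n + (k + 1) + 1 = n + k + 2 := by omega
  have idx2 : n + 1 + k + 1 = n + k + 2 := by omega
  have r1 : (n + k + 2) * ((n + k + 1).choose k) = ((n + k + 2).choose (k + 1)) * (k + 1) := by
    have := Nat.add_one_mul_choose_eq (n + k + 1) k
    simpa [Nat.succ_eq_add_one] using this
  have r2 : ((n + k + 2).choose (k + 1)) * (k + 1) = ((n + k + 2).choose k) * (n + 2) := by
    have := Nat.choose_succ_right_eq (n + k + 2) k
    rwa [show n + k + 2 - k = n + 2 from by omega] at this
  have r3 : (n + k + 2).choose (k + 1) = (n + k + 1).choose k + (n + k + 1).choose (k + 1) := by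
    rw [show n + k + 2 = (n + k + 1) + 1 from by omega]
    exact Nat.choose_succ_succ (n + k + 1) k
  set p : ℝ := (n : ℝ) + 1 with hp0
  set q : ℝ := (k : ℝ) + 1 with hq0
  have hp : 0 < p := by positivity
  have hq : 0 < q := by positivity
  have hpq : 0 < p + q := by positivity
  have hc : 0 < c := by
    rw [hc0]
    exact_mod_cast Nat.choose_pos (by omega : k + 1 ≤ n + (k + 1) + 1)
  have e1 : (p + q) * a = q * c := by
    have h' : ((n + k + 2 : ℕ) : ℝ) * a = c * ((k + 1 : ℕ) : ℝ) := by
      rw [ha0, hc0, idx]; exact_mod_cast r1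
    push_cast at h'
    rw [hp0, hq0]
    linear_combination h'
  have e2 : q * c = (p + 1) * b := by
    have h' : c * ((k + 1 : ℕ) : ℝ) = b * ((n + 2 : ℕ) : ℝ) := by
      rw [hb0, hc0, idx, idx2]; exact_mod_cast r2
    push_cast at h'
    rw [hp0, hq0]
    linear_combination h'
  have e3 : c = a + d := by
    have h' : c = a + d := by
      rw [ha0, hc0, hd0, idx]; exact_mod_cast r3
    exact h'
  have haa : a = q * c / (p + q) := by
    rw [eq_div_iff (ne_of_gt hpq)]
    linear_combination e1
  have hbb : b = q * c / (p + 1) := by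
    rw [eq_div_iff (by positivity : (p + 1) ≠ 0)]
    linear_combination -e2
  have hdd : d = p * c / (p + q) := by
    rw [eq_div_iff (ne_of_gt hpq)]
    have hda : d = c - a := by linarith
    rw [hda]
    linear_combination -e1
  rw [show (((n + 1 : ℕ) : ℝ) + 1) = p + 1 from by push_cast [hp0]; ring]
  rw [haa, hbb, hdd]
  field_simp
  ring

lemma iter_eq (ψ : ℕ → ℝ) : ∀ k, nabla^[k] (Tr 0 ψ) = Tr k (nabla^[k] ψ) := by
  intro k
  induction k with
  | zero => simp
  | succ k ih =>
    rw [Function.iterate_succ' nabla k]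
    funext n
    simp only [Function.comp_apply]
    rw [ih]
    show Tr k (nabla^[k] ψ) n - Tr k (nabla^[k] ψ) (n + 1)
      = Tr (k + 1) (nabla (nabla^[k] ψ)) n
    exact key_step (nabla^[k] ψ) k n

theorem stmt12 (x : ℕ → ℝ) (hx : ∀ n, 0 < x n)
    (h : CompletelyAlternating (fun n => Real.log (x n))) :
    CompletelyAlternating (fun n =>
      Real.log ((∏ i ∈ Finset.range (n + 1), x i) ^ ((1 : ℝ) / ((n : ℝ) + 1)))) := by
  set ψ : ℕ → ℝ := fun n => Real.log (x n) with hψ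
  have hfun : (fun n => Real.log ((∏ i ∈ Finset.range (n + 1), x i) ^ ((1 : ℝ) / ((n : ℝ) + 1))))
      = Tr 0 ψ := by
    funext n
    have hprod : 0 < ∏ i ∈ Finset.range (n + 1), x i :=
      Finset.prod_pos fun i _ => hx i
    rw [Real.log_rpow hprod, Real.log_prod (fun i _ => (hx i).ne')]
    simp only [Tr, Nat.choose_zero_right, Nat.cast_one, one_mul, mul_one]
    rw [one_div, inv_mul_eq_div]
  intro k hk n
  rw [hfun, iter_eq ψ k]
  simp only [Tr]
  apply div_nonpos_of_nonpos_of_nonneg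
  · apply Finset.sum_nonpos
    intro m _
    exact mul_nonpos_of_nonneg_of_nonpos (by positivity) (h k hk m)
  · positivity
end

section
/- If (γ_n) is a completely monotone sequence of nonnegative reals with γ_0 = 1, then the sequence (e^{γ_n − 1}) is also completely monotone. -/
/-- auxiliary lemmas -/
lemma cm_nabla {φ : ℕ → ℝ} (h : CompletelyMonotone φ) :
    CompletelyMonotone (nabla φ) := by
  intro k n
  have := h (k + 1) n
  rwa [Function.iterate_succ_apply] at this

lemma nabla_zero : nabla (fun _ => (0 : ℝ)) = fun _ => (0 : ℝ) := by
  funext n; simp [nabla]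

lemma iter_nabla_zero (k : ℕ) : nabla^[k] (fun _ => (0 : ℝ)) = fun _ => (0 : ℝ) := by
  induction k with
  | zero => rfl
  | succ k ih => rw [Function.iterate_succ_apply, nabla_zero, ih]

lemma cm_const {c : ℝ} (hc : 0 ≤ c) : CompletelyMonotone (fun _ => c) := by
  intro k n
  cases k with
  | zero => simpa using hc
  | succ k =>
    rw [Function.iterate_succ_apply]
    have : nabla (fun _ => c) = fun _ => (0 : ℝ) := by funext m; simp [nabla]
    rw [this, iter_nabla_zero]

lemma iter_nabla_add (k : ℕ) : ∀ (f g : ℕ → ℝ) (n : ℕ),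
    nabla^[k] (fun i => f i + g i) n = nabla^[k] f n + nabla^[k] g n := by
  induction k with
  | zero => intro f g n; rfl
  | succ k ih =>
    intro f g n
    rw [Function.iterate_succ_apply, Function.iterate_succ_apply,
        Function.iterate_succ_apply]
    have : nabla (fun i => f i + g i) = fun i => nabla f i + nabla g i := by
      funext m; simp [nabla]; ring
    rw [this, ih]

lemma iter_nabla_shift (k : ℕ) : ∀ (φ : ℕ → ℝ) (n : ℕ),
    nabla^[k] (fun i => φ (i + 1)) n = nabla^[k] φ (n + 1) := by
  induction k with
  | zero => intro φ n; rfl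
  | succ k ih =>
    intro φ n
    rw [Function.iterate_succ_apply, Function.iterate_succ_apply]
    have : nabla (fun i => φ (i + 1)) = fun i => nabla φ (i + 1) := by
      funext m; simp [nabla]
    rw [this, ih]

lemma cm_shift {φ : ℕ → ℝ} (h : CompletelyMonotone φ) :
    CompletelyMonotone (fun i => φ (i + 1)) := by
  intro k n
  rw [iter_nabla_shift]
  exact h k (n + 1)

lemma cm_mul_aux (k : ℕ) : ∀ (φ ψ : ℕ → ℝ), CompletelyMonotone φ →
    CompletelyMonotone ψ → ∀ n, 0 ≤ nabla^[k] (fun i => φ i * ψ i) n := by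
  induction k with
  | zero => intro φ ψ hφ hψ n; exact mul_nonneg (hφ 0 n) (hψ 0 n)
  | succ k ih =>
    intro φ ψ hφ hψ n
    rw [Function.iterate_succ_apply]
    have hre : nabla (fun i => φ i * ψ i)
        = fun i => (nabla φ i) * ψ (i + 1) + φ i * (nabla ψ i) := by
      funext m; simp [nabla]; ring
    rw [hre]
    have h1 := ih (nabla φ) (fun i => ψ (i + 1)) (cm_nabla hφ) (cm_shift hψ) n
    have h2 := ih φ (nabla ψ) hφ (cm_nabla hψ) n
    have := iter_nabla_add k (fun i => nabla φ i * ψ (i + 1))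
        (fun i => φ i * nabla ψ i) n
    rw [this]
    exact add_nonneg h1 h2

lemma cm_mul {φ ψ : ℕ → ℝ} (hφ : CompletelyMonotone φ) (hψ : CompletelyMonotone ψ) :
    CompletelyMonotone (fun i => φ i * ψ i) :=
  fun k n => cm_mul_aux k φ ψ hφ hψ n

lemma cm_pow {γ : ℕ → ℝ} (h : CompletelyMonotone γ) (m : ℕ) :
    CompletelyMonotone (fun i => γ i ^ m) := by
  induction m with
  | zero => simpa using cm_const (by norm_num : (0:ℝ) ≤ 1)
  | succ m ih =>
    have : (fun i => γ i ^ (m + 1)) = fun i => γ i * γ i ^ m := by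
      funext i; rw [pow_succ']
    rw [this]
    exact cm_mul h ih

lemma cm_le (k : ℕ) : ∀ (φ : ℕ → ℝ), CompletelyMonotone φ →
    ∀ n, nabla^[k] φ n ≤ φ n := by
  induction k with
  | zero => intro φ _ n; exact le_refl _
  | succ k ih =>
    intro φ hφ n
    rw [Function.iterate_succ_apply]
    calc nabla^[k] (nabla φ) n ≤ nabla φ n := ih (nabla φ) (cm_nabla hφ) n
      _ = φ n - φ (n + 1) := rfl
      _ ≤ φ n := by
          have := hφ 0 (n + 1)
          simp only [Function.iterate_zero, id_eq] at this
          linarith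

lemma summable_aux {γ : ℕ → ℝ} (h : CompletelyMonotone γ) (k n : ℕ) :
    Summable (fun m : ℕ =>
      (Real.exp (-1) / m.factorial) * nabla^[k] (fun i => γ i ^ m) n) := by
  have hg : Summable (fun m : ℕ => Real.exp (-1) / m.factorial * γ n ^ m) := by
    have hs : Summable (fun m : ℕ => (γ n) ^ m / m.factorial) :=
      Real.summable_pow_div_factorial (γ n)
    exact (hs.mul_left (Real.exp (-1))).congr (fun m => by ring)
  refine Summable.of_nonneg_of_le (fun m => ?_) (fun m => ?_) hg
  · exact mul_nonneg (div_nonneg (Real.exp_nonneg _) (by positivity)) (cm_pow h m k n)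
  · exact mul_le_mul_of_nonneg_left (cm_le k _ (cm_pow h m) n)
      (div_nonneg (Real.exp_nonneg _) (by positivity))

lemma key_eq {γ : ℕ → ℝ} (h : CompletelyMonotone γ) (k : ℕ) : ∀ n,
    nabla^[k] (fun i => Real.exp (γ i - 1)) n
      = ∑' m : ℕ, (Real.exp (-1) / m.factorial) * nabla^[k] (fun i => γ i ^ m) n := by
  induction k with
  | zero =>
    intro n
    simp only [Function.iterate_zero, id_eq]
    have he : Real.exp (γ n - 1) = Real.exp (-1) * Real.exp (γ n) := by
      rw [← Real.exp_add]; ring_nf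
    rw [he, Real.exp_eq_exp_ℝ, NormedSpace.exp_eq_tsum_div, ← tsum_mul_left]
    apply tsum_congr
    intro m
    simp only [Function.iterate_zero, id_eq]
    ring
  | succ k ih =>
    intro n
    rw [Function.iterate_succ_apply']
    show nabla^[k] (fun i => Real.exp (γ i - 1)) n
        - nabla^[k] (fun i => Real.exp (γ i - 1)) (n + 1) = _
    rw [ih n, ih (n + 1), ← Summable.tsum_sub (summable_aux h k n) (summable_aux h k (n + 1))]
    apply tsum_congr
    intro m
    rw [Function.iterate_succ_apply']
    show _ = Real.exp (-1) / m.factorial *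
      (nabla^[k] (fun i => γ i ^ m) n - nabla^[k] (fun i => γ i ^ m) (n + 1))
    ring

theorem stmt13 (γ : ℕ → ℝ) (hpos : ∀ n, 0 ≤ γ n) (h0 : γ 0 = 1)
    (h : CompletelyMonotone γ) :
    CompletelyMonotone (fun n => Real.exp (γ n - 1)) := by
  intro k n
  rw [key_eq h k n]
  apply tsum_nonneg
  intro m
  exact mul_nonneg (div_nonneg (Real.exp_nonneg _) (by positivity)) (cm_pow h m k n)
end
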